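/- For any partition λ of n, the Schur function s_λ equals the sum over compositions α of n of d_{λ,set(α)} F_α, where d_{λ,I} is the number of standard Young tableaux of shape λ with descent set I. -/

import Mathlib

open scoped Classical

noncomputable section

/-- The subset of `{1,...,n-1}` associated to a composition of `n`:
the set of proper partial sums. -/
def Composition.descSet {n : ℕ} (c : Composition n) : Finset ℕ :=
  (Finset.Ico 1 c.length).image c.sizeUpTo

/-- Fundamental quasisymmetric function indexed by a composition. -/
def Fqsym (n : ℕ) (c : Composition n) : MvPowerSeries ℕ ℂ :=
  fun d => if ∃ e : Fin n → ℕ, Monotone e ∧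
      (∀ k, ∀ h : k < n, k ∈ c.descSet → e ⟨k - 1, by omega⟩ < e ⟨k, h⟩) ∧
      (∀ j, d j = (Finset.univ.filter fun t => e t = j).card)
    then 1 else 0

/-- Number of entries of a semistandard Young tableau equal to `j`. -/
def ssytWeight {μ : YoungDiagram} (T : SemistandardYoungTableau μ) (j : ℕ) : ℕ :=
  (μ.cells.filter fun c => T c.1 c.2 = j).card

/-- The Schur function of shape `μ`, in variables `x_0, x_1, x_2, ...`. -/
def schur (μ : YoungDiagram) : MvPowerSeries ℕ ℂ :=
  fun d => (Nat.card {T : SemistandardYoungTableau μ // ∀ j, ssytWeight T j = d j} : ℂ)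

/-- A standard Young tableau with `n` boxes: each of `1, ..., n` appears exactly once. -/
def IsStdYT {μ : YoungDiagram} (n : ℕ) (T : SemistandardYoungTableau μ) : Prop :=
  ∀ k ∈ Finset.Icc 1 n, (μ.cells.filter fun c => T c.1 c.2 = k).card = 1

/-- Descent set of a standard Young tableau: `k` is a descent iff `k+1` lies in
a strictly lower row than `k`. -/
def sytDes {μ : YoungDiagram} (n : ℕ) (T : SemistandardYoungTableau μ) : Finset ℕ :=
  (Finset.Icc 1 (n - 1)).filter fun k =>
    ∃ c₁ ∈ μ.cells, ∃ c₂ ∈ μ.cells,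
      T c₁.1 c₁.2 = k ∧ T c₂.1 c₂.2 = k + 1 ∧ c₁.1 < c₂.1

/-- `d_{λ,I}`: the number of standard Young tableaux of shape `λ` with descent set `I`. -/
def dCoef (μ : YoungDiagram) (n : ℕ) (I : Finset ℕ) : ℕ :=
  Nat.card {T : SemistandardYoungTableau μ // IsStdYT n T ∧ sytDes n T = I}

/-- transfer filter-card from `Fin n` to `range n`. -/
lemma card_filter_fin (n : ℕ) (p : ℕ → Prop) [DecidablePred p] :
    (Finset.univ.filter fun t : Fin n => p t.val).card
      = ((Finset.range n).filter p).card := by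
  apply Finset.card_nbij (fun t => t.val)
  · intro t ht
    simp only [Finset.mem_coe, Finset.mem_filter, Finset.mem_range, Finset.mem_univ] at *
    exact ⟨t.isLt, ht.2⟩
  · intro a _ b _ h; exact Fin.ext h
  · intro k hk
    simp only [Finset.mem_filter, Finset.mem_range, Finset.coe_filter] at *
    exact ⟨⟨k, hk.1⟩, by simp [hk.2], rfl⟩

/-- count of values `< v` in terms of fibers. -/
lemma card_filter_lt_sum {α : Type*} (s : Finset α) (g : α → ℕ) (v : ℕ) :
    (s.filter fun t => g t < v).card
      = ∑ j ∈ Finset.range v, (s.filter fun t => g t = j).card := by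
  rw [Finset.card_eq_sum_card_fiberwise (f := g) (t := Finset.range v)
    (fun t ht => by simpa using (Finset.mem_filter.1 ht).2)]
  apply Finset.sum_congr rfl
  intro j hj
  simp only [Finset.mem_range] at hj
  congr 1
  rw [Finset.filter_filter]
  apply Finset.filter_congr
  intro t _
  constructor
  · rintro ⟨_, h⟩; exact h
  · intro h; exact ⟨h ▸ hj, h⟩

/-- count of values `≤ v` in terms of fibers. -/
lemma card_filter_le_sum {α : Type*} (s : Finset α) (g : α → ℕ) (v : ℕ) :
    (s.filter fun t => g t ≤ v).card
      = ∑ j ∈ Finset.range (v + 1), (s.filter fun t => g t = j).card := by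
  rw [← card_filter_lt_sum]
  simp only [Nat.lt_succ_iff]

lemma card_le_eq_sum {n : ℕ} (e : Fin n → ℕ) (v : ℕ) :
    (Finset.univ.filter fun t => e t ≤ v).card
      = ∑ j ∈ Finset.range (v + 1), (Finset.univ.filter fun t => e t = j).card :=
  card_filter_le_sum _ e v

/-- a monotone function `Fin n → ℕ` is determined by its fiber cardinalities. -/
lemma monotone_eq_of_fibers {n : ℕ} (e f : Fin n → ℕ) (he : Monotone e) (hf : Monotone f)
    (h : ∀ j, (Finset.univ.filter fun t => e t = j).card
       = (Finset.univ.filter fun t => f t = j).card) : e = f := by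
  have key : ∀ (e f : Fin n → ℕ), Monotone e → Monotone f →
      (∀ j, (Finset.univ.filter fun t => e t = j).card
        = (Finset.univ.filter fun t => f t = j).card) → ∀ k, ¬ (e k < f k) := by
    intro e f he hf h k hlt
    have h1 : (Finset.Iic k : Finset (Fin n)) ⊆ Finset.univ.filter fun t => e t ≤ e k := by
      intro t ht
      simp only [Finset.mem_Iic] at ht
      simp [he ht]
    have h2 : (Finset.univ.filter fun t => f t ≤ e k) ⊆ Finset.Iio k := by
      intro t ht
      simp only [Finset.mem_filter] at ht
      simp only [Finset.mem_Iio]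
      by_contra hc
      have := hf (not_lt.1 hc)
      omega
    have e1 : (k : ℕ) + 1 ≤ (Finset.univ.filter fun t => e t ≤ e k).card :=
      le_trans (by rw [Fin.card_Iic]) (Finset.card_le_card h1)
    have e2 : (Finset.univ.filter fun t => f t ≤ e k).card ≤ (k : ℕ) :=
      le_trans (Finset.card_le_card h2) (by rw [Fin.card_Iio])
    have : (Finset.univ.filter fun t => e t ≤ e k).card
        = (Finset.univ.filter fun t => f t ≤ e k).card := by
      rw [card_le_eq_sum, card_le_eq_sum]
      exact Finset.sum_congr rfl fun j _ => h j
    omega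
  funext k
  rcases lt_trichotomy (e k) (f k) with hc | hc | hc
  · exact absurd hc (key e f he hf h k)
  · exact hc
  · exact absurd hc (key f e hf he (fun j => (h j).symm) k)

lemma getD_count (j : ℕ) : ∀ (l : List ℕ),
    ((Finset.range l.length).filter fun k => l.getD k 0 = j).card = l.count j
  | [] => by simp
  | x :: xs => by
    rw [List.length_cons, Finset.range_add_one', Finset.filter_insert, Finset.filter_map]
    simp only [Function.comp_def, Function.Embedding.coeFn_mk, List.getD_cons_succ,
      List.getD_cons_zero, List.count_cons, beq_iff_eq]
    change (if x = j then insert 0 (Finset.map _ ((Finset.range xs.length).filter fun k => xs.getD k 0 = j)) else Finset.map _ ((Finset.range xs.length).filter fun k => xs.getD k 0 = j)).card = _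
    by_cases hx : x = j
    · rw [if_pos hx, if_pos hx,
        Finset.card_insert_of_notMem (by simp), Finset.card_map, getD_count j xs]
    · rw [if_neg hx, if_neg hx, Finset.card_map, getD_count j xs, Nat.add_zero]

lemma sorted_getD_mono {l : List ℕ} (hs : l.Pairwise (· ≤ ·)) {a b : ℕ} (hab : a ≤ b)
    (hb : b < l.length) : l.getD a 0 ≤ l.getD b 0 := by
  have ha : a < l.length := lt_of_le_of_lt hab hb
  rw [List.getD_eq_getElem l 0 ha, List.getD_eq_getElem l 0 hb]
  exact hs.rel_get_of_le (show (⟨a, ha⟩ : Fin _) ≤ ⟨b, hb⟩ from hab)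

lemma sorted_getD_eq {l : List ℕ} (hs : l.Pairwise (· ≤ ·)) {k v : ℕ} (hk : k < l.length)
    (h1 : ((Finset.range l.length).filter fun t => l.getD t 0 < v).card ≤ k)
    (h2 : k < ((Finset.range l.length).filter fun t => l.getD t 0 ≤ v).card) :
    l.getD k 0 = v := by
  rcases lt_trichotomy (l.getD k 0) v with h | h | h
  · exfalso
    have hsub : Finset.range (k+1) ⊆ (Finset.range l.length).filter fun t => l.getD t 0 < v := by
      intro t ht
      simp only [Finset.mem_range, Nat.lt_succ_iff] at ht
      simp only [Finset.mem_filter, Finset.mem_range]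
      exact ⟨lt_of_le_of_lt ht hk, lt_of_le_of_lt (sorted_getD_mono hs ht hk) h⟩
    have := Finset.card_le_card hsub
    simp only [Finset.card_range] at this
    omega
  · exact h
  · exfalso
    have hsub : ((Finset.range l.length).filter fun t => l.getD t 0 ≤ v)
        ⊆ Finset.range k := by
      intro t ht
      simp only [Finset.mem_filter, Finset.mem_range] at ht
      simp only [Finset.mem_range]
      by_contra hc
      exact absurd (le_trans (sorted_getD_mono hs (not_lt.1 hc) ht.1) ht.2) (not_le.2 h)
    have := Finset.card_le_card hsub
    simp only [Finset.card_range] at this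
    omega

namespace Composition

variable {n : ℕ}

lemma descSet_subset (c : Composition n) : c.descSet ⊆ Finset.Icc 1 (n-1) := by
  intro k hk
  simp only [descSet, Finset.mem_image, Finset.mem_Ico] at hk
  obtain ⟨i, ⟨h1, h2⟩, rfl⟩ := hk
  have hlt : c.sizeUpTo i < n := by
    have ha := c.sizeUpTo_strict_mono h2
    have hb := c.sizeUpTo_le (i+1)
    omega
  have h0 : c.sizeUpTo 0 < c.sizeUpTo 1 := c.sizeUpTo_strict_mono (by omega)
  have hm := c.monotone_sizeUpTo h1
  rw [c.sizeUpTo_zero] at h0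
  exact Finset.mem_Icc.2 ⟨by omega, by omega⟩

lemma sizeUpTo_lt_of_lt (c : Composition n) {i j : ℕ} (hij : i < j) (hj : j ≤ c.length) :
    c.sizeUpTo i < c.sizeUpTo j :=
  lt_of_lt_of_le (c.sizeUpTo_strict_mono (by omega)) (c.monotone_sizeUpTo hij)

lemma descSet_card (c : Composition n) : c.descSet.card = c.length - 1 := by
  rw [descSet, Finset.card_image_of_injOn, Nat.card_Ico]
  intro a ha b hb hab
  simp only [Finset.coe_Ico, Set.mem_Ico] at ha hb
  by_contra hne
  rcases Nat.lt_or_ge a b with h | h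
  · exact absurd hab (ne_of_lt (c.sizeUpTo_lt_of_lt h (by omega)))
  · exact absurd hab.symm (ne_of_lt (c.sizeUpTo_lt_of_lt (by omega) (by omega)))

lemma length_pos_of_pos' (c : Composition n) (hn : 0 < n) : 0 < c.length := by
  by_contra h
  have h0 : c.length = 0 := by omega
  have hs := c.sizeUpTo_length
  rw [h0, c.sizeUpTo_zero] at hs
  omega

lemma eq_of_zero (hn : n = 0) (c1 c2 : Composition n) : c1 = c2 := by
  have h : ∀ c : Composition n, c.blocks = [] := by
    intro c
    cases hb : c.blocks with
    | nil => rfl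
    | cons x xs =>
      exfalso
      have hs := c.blocks_sum
      rw [hb] at hs
      have := c.blocks_pos (hb ▸ (List.mem_cons_self : x ∈ x :: xs))
      simp at hs
      omega
  ext1
  rw [h c1, h c2]

lemma descSet_injective : Function.Injective (descSet (n := n)) := by
  intro c1 c2 h
  rcases Nat.eq_zero_or_pos n with hn | hn
  · exact eq_of_zero hn c1 c2
  have hl1 : 0 < c1.length := c1.length_pos_of_pos' hn
  have hl2 : 0 < c2.length := c2.length_pos_of_pos' hn
  have hcard : c1.length = c2.length := by
    have := c1.descSet_card
    have := c2.descSet_card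
    rw [h] at *
    omega
  -- the two strictly monotone enumerations of the common descSet agree
  set k := c1.length - 1 with hk
  have hcard1 : c1.descSet.card = k := c1.descSet_card
  have f1mono : StrictMono (fun i : Fin k => c1.sizeUpTo (i.val + 1)) := by
    intro a b hab
    exact c1.sizeUpTo_lt_of_lt (by omega) (by omega)
  have f2mono : StrictMono (fun i : Fin k => c2.sizeUpTo (i.val + 1)) := by
    intro a b hab
    exact c2.sizeUpTo_lt_of_lt (by omega) (by omega)
  have f1mem : ∀ i : Fin k, c1.sizeUpTo (i.val + 1) ∈ c1.descSet := by
    intro i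
    exact Finset.mem_image.2 ⟨i.val + 1, Finset.mem_Ico.2 ⟨by omega, by omega⟩, rfl⟩
  have f2mem : ∀ i : Fin k, c2.sizeUpTo (i.val + 1) ∈ c1.descSet := by
    intro i
    rw [h]
    exact Finset.mem_image.2 ⟨i.val + 1, Finset.mem_Ico.2 ⟨by omega, by omega⟩, rfl⟩
  have heq : (fun i : Fin k => c1.sizeUpTo (i.val + 1))
      = (fun i : Fin k => c2.sizeUpTo (i.val + 1)) := by
    rw [Finset.orderEmbOfFin_unique hcard1 f1mem f1mono,
      Finset.orderEmbOfFin_unique hcard1 f2mem f2mono]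
  have hsz : ∀ i, i ≤ c1.length → c1.sizeUpTo i = c2.sizeUpTo i := by
    intro i hi
    rcases Nat.eq_zero_or_pos i with h0 | h0
    · rw [h0, c1.sizeUpTo_zero, c2.sizeUpTo_zero]
    rcases Nat.lt_or_ge i c1.length with hilt | hile
    · have : i - 1 < k := by omega
      have := congrFun heq ⟨i - 1, this⟩
      simpa [Nat.sub_add_cancel h0] using this
    · have : i = c1.length := by omega
      rw [this, c1.sizeUpTo_length, hcard, c2.sizeUpTo_length]
  -- deduce blocks are equal
  ext1
  apply List.ext_getElem
  · rw [← Composition.length, ← Composition.length, hcard]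
  intro i h1 h2
  have hi : i < c1.length := h1
  have e1 := c1.sizeUpTo_succ hi
  have e2 := c2.sizeUpTo_succ (by omega : i < c2.length)
  have ha := hsz i (by omega)
  have hb := hsz (i+1) (by omega)
  omega



def mkBlocks (n : ℕ) : ℕ → List ℕ → List ℕ
  | a, [] => [n - a]
  | a, x :: xs => (x - a) :: mkBlocks n x xs

lemma mkBlocks_sum (n : ℕ) : ∀ (L : List ℕ) (a : ℕ), a < n → List.Chain (· < ·) a L →
    (∀ x ∈ L, x < n) → (mkBlocks n a L).sum + a = n
  | [], a => by intro ha _ _; simp [mkBlocks]; omega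
  | x :: xs, a => by
    intro ha hc hx
    replace hc : _ ∧ List.Chain (· < ·) x xs := List.chain_cons.1 hc
    have hxn : x < n := hx x List.mem_cons_self
    have ih := mkBlocks_sum n xs x hxn hc.2 (fun y hy => hx y (List.mem_cons_of_mem x hy))
    simp only [mkBlocks, List.sum_cons]
    omega

lemma mkBlocks_pos (n : ℕ) : ∀ (L : List ℕ) (a : ℕ), a < n → List.Chain (· < ·) a L →
    (∀ x ∈ L, x < n) → ∀ b ∈ mkBlocks n a L, 0 < b
  | [], a => by
    intro ha _ _ b hb
    simp only [mkBlocks, List.mem_singleton] at hb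
    omega
  | x :: xs, a => by
    intro ha hc hx b hb
    replace hc : _ ∧ List.Chain (· < ·) x xs := List.chain_cons.1 hc
    have hxn : x < n := hx x List.mem_cons_self
    simp only [mkBlocks, List.mem_cons] at hb
    rcases hb with hb | hb
    · omega
    · exact mkBlocks_pos n xs x hxn hc.2 (fun y hy => hx y (List.mem_cons_of_mem x hy)) b hb

lemma mkBlocks_length (n : ℕ) : ∀ (L : List ℕ) (a : ℕ), (mkBlocks n a L).length = L.length + 1
  | [], a => rfl
  | x :: xs, a => by simp only [mkBlocks, List.length_cons, mkBlocks_length n xs x]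

lemma mkBlocks_take (n : ℕ) : ∀ (L : List ℕ) (a : ℕ) (i : ℕ) (hi : i < L.length),
    List.Chain (· < ·) a L →
    ((mkBlocks n a L).take (i + 1)).sum + a = L.get ⟨i, hi⟩
  | [], a => by intro i hi; simp at hi
  | x :: xs, a => by
    intro i hi hc
    replace hc : _ ∧ List.Chain (· < ·) x xs := List.chain_cons.1 hc
    rcases Nat.eq_zero_or_pos i with h0 | h0
    · subst h0
      simp [mkBlocks]
      omega
    · obtain ⟨i', rfl⟩ : ∃ i', i = i' + 1 := ⟨i - 1, by omega⟩
      have hi' : i' < xs.length := by simpa using hi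
      have ih := mkBlocks_take n xs x i' hi' hc.2
      have hax : a < x := hc.1
      simp only [mkBlocks, List.take_succ_cons, List.sum_cons]
      simp only [List.get_cons_succ]
      omega

lemma exists_descSet (n : ℕ) (I : Finset ℕ) (hI : I ⊆ Finset.Icc 1 (n-1)) :
    ∃ c : Composition n, c.descSet = I := by
  rcases Nat.eq_zero_or_pos n with hn | hn
  · subst hn
    have hI0 : I = ∅ := by
      rw [← Finset.subset_empty]
      intro x hx
      have hmem := hI hx
      simp only [Finset.mem_Icc] at hmem
      exact absurd hmem (by omega)
    refine ⟨Composition.ones 0, ?_⟩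
    rw [hI0, Composition.descSet]
    have h0 : (Composition.ones 0).length = 0 := by simp
    rw [h0]
    simp
  · set L := I.sort (· ≤ ·) with hL
    have hmemL : ∀ x, x ∈ L ↔ x ∈ I := fun x => Finset.mem_sort _
    have hLlt : ∀ x ∈ L, x < n := by
      intro x hx
      have := hI ((hmemL x).1 hx)
      simp only [Finset.mem_Icc] at this
      omega
    have hchain : List.Chain (· < ·) 0 L := by
      show List.IsChain _ (0 :: L)
      rw [List.isChain_iff_pairwise]
      apply List.Pairwise.cons
      · intro x hx
        have := hI ((hmemL x).1 hx)
        simp only [Finset.mem_Icc] at this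
        omega
      · exact I.sortedLT_sort.pairwise
    refine ⟨⟨mkBlocks n 0 L, fun hb => mkBlocks_pos n L 0 hn hchain hLlt _ hb, by
      have := mkBlocks_sum n L 0 hn hchain hLlt; omega⟩, ?_⟩
    set c : Composition n := ⟨mkBlocks n 0 L, fun hb => mkBlocks_pos n L 0 hn hchain hLlt _ hb, by
      have := mkBlocks_sum n L 0 hn hchain hLlt; omega⟩ with hc
    have hlen : c.length = L.length + 1 := mkBlocks_length n L 0
    ext j
    simp only [Composition.descSet, Finset.mem_image, Finset.mem_Ico]
    constructor
    · rintro ⟨i, ⟨h1, h2⟩, rfl⟩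
      rw [hlen] at h2
      have hi' : i - 1 < L.length := by omega
      have ht := mkBlocks_take n L 0 (i - 1) hi' hchain
      have : c.sizeUpTo i = L.get ⟨i - 1, hi'⟩ := by
        rw [Composition.sizeUpTo]
        have hcb : c.blocks = mkBlocks n 0 L := rfl
        rw [hcb]
        have hieq : i - 1 + 1 = i := by omega
        rw [hieq] at ht
        omega
      rw [this]
      exact (hmemL _).1 (List.get_mem L ⟨i - 1, hi'⟩)
    · intro hj
      obtain ⟨i, hi⟩ := List.mem_iff_get.1 ((hmemL j).2 hj)
      refine ⟨i.val + 1, ⟨by omega, by rw [hlen]; omega⟩, ?_⟩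
      have ht := mkBlocks_take n L 0 i.val i.isLt hchain
      rw [Composition.sizeUpTo]
      have hcb : c.blocks = mkBlocks n 0 L := rfl
      rw [hcb]
      have : L.get ⟨i.val, i.isLt⟩ = j := by rw [← hi]
      omega

lemma sum_descSet {n : ℕ} {M : Type*} [AddCommMonoid M] (f : Finset ℕ → M) :
    ∑ α : Composition n, f α.descSet
      = ∑ I ∈ (Finset.Icc 1 (n-1)).powerset, f I := by
  apply Finset.sum_bij (fun α _ => α.descSet)
  · intro α _
    exact Finset.mem_powerset.2 α.descSet_subset
  · intro a _ b _ h
    exact descSet_injective h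
  · intro I hI
    obtain ⟨c, hc⟩ := exists_descSet n I (Finset.mem_powerset.1 hI)
    exact ⟨c, Finset.mem_univ c, hc⟩
  · intro α _
    rfl

end Composition

section Std

variable {μ : YoungDiagram} {n : ℕ} {T : SemistandardYoungTableau μ}

lemma std_mem_Icc (hμ : μ.cells.card = n) (hT : IsStdYT n T) :
    ∀ c ∈ μ.cells, T c.1 c.2 ∈ Finset.Icc 1 n := by
  set S := μ.cells.filter (fun c => T c.1 c.2 ∈ Finset.Icc 1 n) with hS
  have hcard : S.card = ∑ k ∈ Finset.Icc 1 n, (S.filter fun c => T c.1 c.2 = k).card :=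
    Finset.card_eq_sum_card_fiberwise (fun c hc => (Finset.mem_filter.1 hc).2)
  have hfib : ∀ k ∈ Finset.Icc 1 n,
      (S.filter fun c => T c.1 c.2 = k) = (μ.cells.filter fun c => T c.1 c.2 = k) := by
    intro k hk
    rw [hS, Finset.filter_filter]
    apply Finset.filter_congr
    intro c _
    constructor
    · rintro ⟨_, h⟩; exact h
    · intro h; exact ⟨h ▸ hk, h⟩
  have hSn : S.card = n := by
    rw [hcard, Finset.sum_congr rfl (fun k hk => by rw [hfib k hk, hT k hk])]
    simp
  have hsub : S ⊆ μ.cells := Finset.filter_subset _ _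
  have : S = μ.cells := Finset.eq_of_subset_of_card_le hsub (by omega)
  intro c hc
  rw [← this] at hc
  exact (Finset.mem_filter.1 hc).2

lemma std_injOn (hμ : μ.cells.card = n) (hT : IsStdYT n T) :
    ∀ c ∈ μ.cells, ∀ c' ∈ μ.cells, T c.1 c.2 = T c'.1 c'.2 → c = c' := by
  intro c hc c' hc' heq
  by_contra hne
  have hk := std_mem_Icc hμ hT c hc
  have h1 := hT _ hk
  have hsub : ({c, c'} : Finset (ℕ × ℕ)) ⊆ μ.cells.filter fun x => T x.1 x.2 = T c.1 c.2 := by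
    intro x hx
    rcases Finset.mem_insert.1 hx with rfl | hx
    · exact Finset.mem_filter.2 ⟨hc, rfl⟩
    · rw [Finset.mem_singleton.1 hx]
      exact Finset.mem_filter.2 ⟨hc', heq.symm⟩
  have := Finset.card_le_card hsub
  rw [Finset.card_pair hne] at this
  omega

lemma std_exists_cell (hT : IsStdYT n T) {k : ℕ} (hk : k ∈ Finset.Icc 1 n) :
    ∃ c ∈ μ.cells, T c.1 c.2 = k := by
  have := hT k hk
  rw [Finset.card_eq_one] at this
  obtain ⟨c, hc⟩ := this
  have : c ∈ μ.cells.filter fun x => T x.1 x.2 = k := hc ▸ Finset.mem_singleton_self c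
  exact ⟨c, (Finset.mem_filter.1 this).1, (Finset.mem_filter.1 this).2⟩

/-- if `k+1` is in a weakly higher row than `k`, then it is in a strictly further column. -/
lemma succ_col {k : ℕ} {ca cb : ℕ × ℕ} (hca : ca ∈ μ.cells) (hcb : cb ∈ μ.cells)
    (ha : T ca.1 ca.2 = k) (hb : T cb.1 cb.2 = k + 1) (hrow : cb.1 ≤ ca.1) :
    ca.2 < cb.2 := by
  by_contra hcol
  push_neg at hcol
  have hm : (cb.1, ca.2) ∈ μ := by
    apply μ.up_left_mem hrow (le_refl _)
    exact (YoungDiagram.mem_cells ca).1 hca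
  rcases Nat.lt_or_ge cb.1 ca.1 with hr | hr
  · have h1 : T cb.1 ca.2 < T ca.1 ca.2 := T.col_strict hr ((YoungDiagram.mem_cells ca).1 hca)
    rcases Nat.lt_or_ge cb.2 ca.2 with hc2 | hc2
    · have h2 : T cb.1 cb.2 ≤ T cb.1 ca.2 := T.row_weak hc2 hm
      omega
    · have : cb.2 = ca.2 := by omega
      rw [this] at hb
      omega
  · have hreq : cb.1 = ca.1 := by omega
    rcases Nat.lt_or_ge cb.2 ca.2 with hc2 | hc2
    · have h2 : T cb.1 cb.2 ≤ T cb.1 ca.2 := T.row_weak hc2 hm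
      rw [hreq] at hb h2
      omega
    · have : cb = ca := by
        have : cb.2 = ca.2 := by omega
        exact Prod.ext hreq this
      rw [this] at hb
      omega

lemma noDescRun (hμ : μ.cells.card = n) (hT : IsStdYT n T) (a : ℕ) (ha : 1 ≤ a) :
    ∀ b, a ≤ b → b ≤ n →
    (∀ k, a ≤ k → k < b → k ∉ sytDes n T) →
    ∀ ca, ca ∈ μ.cells → ∀ cb, cb ∈ μ.cells →
    T ca.1 ca.2 = a → T cb.1 cb.2 = b →
    cb.1 ≤ ca.1 ∧ (a < b → ca.2 < cb.2) := by
  intro b hab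
  induction b, hab using Nat.le_induction with
  | base =>
    intro _ _ ca hca cb hcb hTa hTb
    have : ca = cb := std_injOn hμ hT ca hca cb hcb (by omega)
    subst this
    exact ⟨le_refl _, by omega⟩
  | succ b hb ih =>
    intro hbn hnd ca hca cb hcb hTa hTb
    obtain ⟨cm, hcm, hTm⟩ := std_exists_cell hT (Finset.mem_Icc.2 ⟨by omega, by omega⟩ : b ∈ Finset.Icc 1 n)
    have ihm := ih (by omega) (fun k h1 h2 => hnd k h1 (by omega)) ca hca cm hcm hTa hTm
    have hrow : cb.1 ≤ cm.1 := by
      by_contra hcon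
      push_neg at hcon
      apply hnd b hb (by omega)
      exact Finset.mem_filter.2 ⟨Finset.mem_Icc.2 ⟨by omega, by omega⟩,
        ⟨cm, hcm, cb, hcb, hTm, hTb, hcon⟩⟩
    have hcol : cm.2 < cb.2 := succ_col hcm hcb hTm hTb hrow
    constructor
    · omega
    · intro _
      rcases Nat.lt_or_ge a b with h | h
      · have := ihm.2 h
        omega
      · have : a = b := by omega
        subst this
        have : ca = cm := std_injOn hμ hT ca hca cm hcm (by omega)
        rw [this]
        exact hcol

lemma exists_descent (hμ : μ.cells.card = n) (hT : IsStdYT n T) {a b : ℕ} (ha : 1 ≤ a)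
    (hab : a < b) (hbn : b ≤ n) {ca cb : ℕ × ℕ} (hca : ca ∈ μ.cells) (hcb : cb ∈ μ.cells)
    (hTa : T ca.1 ca.2 = a) (hTb : T cb.1 cb.2 = b) (hrow : ca.1 < cb.1) :
    ∃ k, a ≤ k ∧ k < b ∧ k ∈ sytDes n T := by
  by_contra hc
  push_neg at hc
  have := noDescRun hμ hT a ha b (by omega) hbn
    (fun k h1 h2 hk => hc k h1 h2 hk) ca hca cb hcb hTa hTb
  omega

end Std

section Rank

variable {μ : YoungDiagram} {n : ℕ}

/-- Standardization key order: compare values, then columns. -/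
def keyLt (P : SemistandardYoungTableau μ) (c c' : ℕ × ℕ) : Prop :=
  P c.1 c.2 < P c'.1 c'.2 ∨ (P c.1 c.2 = P c'.1 c'.2 ∧ c.2 < c'.2)

lemma keyLt_trans {P : SemistandardYoungTableau μ} {a b c : ℕ × ℕ}
    (h1 : keyLt P a b) (h2 : keyLt P b c) : keyLt P a c := by
  rcases h1 with h1 | ⟨h1, h1'⟩ <;> rcases h2 with h2 | ⟨h2, h2'⟩
  · exact Or.inl (lt_trans h1 h2)
  · exact Or.inl (h2 ▸ h1)
  · exact Or.inl (h1 ▸ h2)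
  · exact Or.inr ⟨h1.trans h2, lt_trans h1' h2'⟩

lemma keyLt_asymm {P : SemistandardYoungTableau μ} {a b : ℕ × ℕ}
    (h1 : keyLt P a b) : ¬ keyLt P b a := by
  rintro (h2 | ⟨h2, h2'⟩) <;> rcases h1 with h1 | ⟨h1, h1'⟩ <;> omega

lemma keyLt_trichotomy (P : SemistandardYoungTableau μ) {a b : ℕ × ℕ}
    (ha : a ∈ μ.cells) (hb : b ∈ μ.cells) :
    keyLt P a b ∨ a = b ∨ keyLt P b a := by
  rcases lt_trichotomy (P a.1 a.2) (P b.1 b.2) with h | h | h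
  · exact Or.inl (Or.inl h)
  · rcases lt_trichotomy a.2 b.2 with h2 | h2 | h2
    · exact Or.inl (Or.inr ⟨h, h2⟩)
    · -- same value same column: same cell
      refine Or.inr (Or.inl ?_)
      rcases lt_trichotomy a.1 b.1 with h1 | h1 | h1
      · exfalso
        have hm : (b.1, a.2) ∈ μ := by rw [h2]; exact (YoungDiagram.mem_cells b).1 hb
        have hlt := P.col_strict h1 hm
        rw [h2] at hlt h
        omega
      · exact Prod.ext h1 h2
      · exfalso
        have hm : (a.1, b.2) ∈ μ := by rw [← h2]; exact (YoungDiagram.mem_cells a).1 ha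
        have hlt := P.col_strict h1 hm
        rw [← h2] at hlt h
        omega
    · exact Or.inr (Or.inr (Or.inr ⟨h.symm, h2⟩))
  · exact Or.inr (Or.inr (Or.inl h))

/-- the rank of a cell in the standardization order. -/
def rnk (P : SemistandardYoungTableau μ) (c : ℕ × ℕ) : ℕ :=
  (μ.cells.filter fun c' => keyLt P c' c).card + 1

lemma rnk_lt_rnk {P : SemistandardYoungTableau μ} {a b : ℕ × ℕ}
    (ha : a ∈ μ.cells) (h : keyLt P a b) : rnk P a < rnk P b := by
  have hsub : insert a (μ.cells.filter fun c' => keyLt P c' a)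
      ⊆ μ.cells.filter fun c' => keyLt P c' b := by
    intro x hx
    rcases Finset.mem_insert.1 hx with rfl | hx
    · exact Finset.mem_filter.2 ⟨ha, h⟩
    · have := Finset.mem_filter.1 hx
      exact Finset.mem_filter.2 ⟨this.1, keyLt_trans this.2 h⟩
  have hni : a ∉ μ.cells.filter fun c' => keyLt P c' a := by
    intro hx
    exact keyLt_asymm (Finset.mem_filter.1 hx).2 (Finset.mem_filter.1 hx).2
  have := Finset.card_le_card hsub
  rw [Finset.card_insert_of_notMem hni] at this
  unfold rnk
  omega

lemma rnk_mem_Icc (hμ : μ.cells.card = n) {P : SemistandardYoungTableau μ} {c : ℕ × ℕ}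
    (hc : c ∈ μ.cells) : rnk P c ∈ Finset.Icc 1 n := by
  have hsub : (μ.cells.filter fun c' => keyLt P c' c) ⊆ μ.cells.erase c := by
    intro x hx
    have hm := Finset.mem_filter.1 hx
    refine Finset.mem_erase.2 ⟨?_, hm.1⟩
    rintro rfl
    exact keyLt_asymm hm.2 hm.2
  have h1 := Finset.card_le_card hsub
  rw [Finset.card_erase_of_mem hc] at h1
  have hpos : 0 < μ.cells.card := Finset.card_pos.2 ⟨c, hc⟩
  unfold rnk
  rw [Finset.mem_Icc]
  omega

lemma rnk_injOn (hμ : μ.cells.card = n) {P : SemistandardYoungTableau μ} {a b : ℕ × ℕ}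
    (ha : a ∈ μ.cells) (hb : b ∈ μ.cells) (h : rnk P a = rnk P b) : a = b := by
  rcases keyLt_trichotomy P ha hb with hk | hk | hk
  · exact absurd h (ne_of_lt (rnk_lt_rnk ha hk))
  · exact hk
  · exact absurd h.symm (ne_of_lt (rnk_lt_rnk hb hk))

/-- standardization of a semistandard tableau. -/
def stdize (P : SemistandardYoungTableau μ) : SemistandardYoungTableau μ where
  entry i j := if (i, j) ∈ μ then rnk P (i, j) else 0
  row_weak' := by
    intro i j1 j2 hj h2
    have h1 : (i, j1) ∈ μ := μ.up_left_mem (le_refl i) (le_of_lt hj) h2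
    rw [if_pos h1, if_pos h2]
    have hk : keyLt P (i, j1) (i, j2) := by
      rcases lt_or_eq_of_le (P.row_weak hj h2) with h | h
      · exact Or.inl h
      · exact Or.inr ⟨h, hj⟩
    exact le_of_lt (rnk_lt_rnk ((YoungDiagram.mem_cells _).2 h1) hk)
  col_strict' := by
    intro i1 i2 j hi h2
    have h1 : (i1, j) ∈ μ := μ.up_left_mem (le_of_lt hi) (le_refl j) h2
    rw [if_pos h1, if_pos h2]
    exact rnk_lt_rnk ((YoungDiagram.mem_cells _).2 h1) (Or.inl (P.col_strict hi h2))
  zeros' := by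
    intro i j h
    rw [if_neg h]

lemma stdize_entry {P : SemistandardYoungTableau μ} {c : ℕ × ℕ} (hc : c ∈ μ.cells) :
    stdize P c.1 c.2 = rnk P c := by
  show (if (c.1, c.2) ∈ μ then rnk P (c.1, c.2) else 0) = rnk P c
  rw [if_pos ((YoungDiagram.mem_cells (c.1, c.2)).1 hc)]

lemma stdize_isStd (hμ : μ.cells.card = n) (P : SemistandardYoungTableau μ) :
    IsStdYT n (stdize P) := by
  intro k hk
  have himg : μ.cells.image (rnk P) = Finset.Icc 1 n := by
    apply Finset.eq_of_subset_of_card_le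
    · intro x hx
      obtain ⟨c, hc, rfl⟩ := Finset.mem_image.1 hx
      exact rnk_mem_Icc hμ hc
    · rw [Nat.card_Icc, Finset.card_image_of_injOn (fun a ha b hb => rnk_injOn hμ ha hb)]
      omega
  have hkimg : k ∈ μ.cells.image (rnk P) := himg ▸ hk
  obtain ⟨c, hc, hck⟩ := Finset.mem_image.1 hkimg
  have : μ.cells.filter (fun x => stdize P x.1 x.2 = k) = {c} := by
    ext x
    rw [Finset.mem_filter, Finset.mem_singleton]
    constructor
    · rintro ⟨hx, hxk⟩
      rw [stdize_entry hx] at hxk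
      exact rnk_injOn hμ hx hc (hxk.trans hck.symm)
    · rintro rfl
      exact ⟨hc, by rw [stdize_entry hc, hck]⟩
  rw [this, Finset.card_singleton]

end Rank

section Unstd

variable {μ : YoungDiagram} {n : ℕ}

/-- descent positions of a sorted list. -/
def Dset (l : List ℕ) (n : ℕ) : Finset ℕ :=
  (Finset.Ico 1 n).filter fun k => l.getD (k-1) 0 < l.getD k 0

variable {l : List ℕ}

/-- the semistandard tableau obtained from a standard tableau `T` and a sorted list `l`
whose descents contain those of `T`. -/
def unstd (l : List ℕ) (hs : l.Pairwise (· ≤ ·)) (hlen : l.length = n)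
    (hμ : μ.cells.card = n) (T : SemistandardYoungTableau μ) (hT : IsStdYT n T)
    (hdes : sytDes n T ⊆ Dset l n) : SemistandardYoungTableau μ where
  entry i j := if (i, j) ∈ μ then l.getD (T i j - 1) 0 else 0
  row_weak' := by
    intro i j1 j2 hj h2
    have h1 : (i, j1) ∈ μ := μ.up_left_mem (le_refl i) (le_of_lt hj) h2
    rw [if_pos h1, if_pos h2]
    have ha : 1 ≤ T i j1 ∧ T i j1 ≤ n :=
      Finset.mem_Icc.1 (std_mem_Icc hμ hT (i, j1) ((YoungDiagram.mem_cells _).2 h1))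
    have hb : 1 ≤ T i j2 ∧ T i j2 ≤ n :=
      Finset.mem_Icc.1 (std_mem_Icc hμ hT (i, j2) ((YoungDiagram.mem_cells _).2 h2))
    have hab : T i j1 < T i j2 := by
      rcases lt_or_eq_of_le (T.row_weak hj h2) with h | h
      · exact h
      · exfalso
        have := std_injOn hμ hT (i, j1) ((YoungDiagram.mem_cells _).2 h1)
          (i, j2) ((YoungDiagram.mem_cells _).2 h2) h
        rw [Prod.ext_iff] at this
        exact absurd this.2 (by simpa using ne_of_lt hj)
    exact sorted_getD_mono hs (by omega) (by omega)
  col_strict' := by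
    intro i1 i2 j hi h2
    have h1 : (i1, j) ∈ μ := μ.up_left_mem (le_of_lt hi) (le_refl j) h2
    rw [if_pos h1, if_pos h2]
    have ha : 1 ≤ T i1 j ∧ T i1 j ≤ n :=
      Finset.mem_Icc.1 (std_mem_Icc hμ hT (i1, j) ((YoungDiagram.mem_cells _).2 h1))
    have hb : 1 ≤ T i2 j ∧ T i2 j ≤ n :=
      Finset.mem_Icc.1 (std_mem_Icc hμ hT (i2, j) ((YoungDiagram.mem_cells _).2 h2))
    have hab : T i1 j < T i2 j := T.col_strict hi h2
    obtain ⟨k, hk1, hk2, hk3⟩ := exists_descent (a := T i1 j) (b := T i2 j) hμ hT ha.1 hab hb.2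
      ((YoungDiagram.mem_cells _).2 h1) ((YoungDiagram.mem_cells _).2 h2) rfl rfl hi
    have hkD := hdes hk3
    rw [Dset, Finset.mem_filter, Finset.mem_Ico] at hkD
    calc l.getD (T i1 j - 1) 0 ≤ l.getD (k - 1) 0 := sorted_getD_mono hs (by omega) (by omega)
      _ < l.getD k 0 := hkD.2
      _ ≤ l.getD (T i2 j - 1) 0 := sorted_getD_mono hs (by omega) (by omega)
  zeros' := by
    intro i j h
    rw [if_neg h]

lemma unstd_entry {hs : l.Pairwise (· ≤ ·)} {hlen : l.length = n}
    {hμ : μ.cells.card = n} {T : SemistandardYoungTableau μ} {hT : IsStdYT n T}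
    {hdes : sytDes n T ⊆ Dset l n} {c : ℕ × ℕ} (hc : c ∈ μ.cells) :
    unstd l hs hlen hμ T hT hdes c.1 c.2 = l.getD (T c.1 c.2 - 1) 0 := by
  show (if (c.1, c.2) ∈ μ then l.getD (T c.1 c.2 - 1) 0 else 0) = _
  rw [if_pos ((YoungDiagram.mem_cells (c.1, c.2)).1 hc)]

lemma unstd_weight {hs : l.Pairwise (· ≤ ·)} {hlen : l.length = n}
    {hμ : μ.cells.card = n} {T : SemistandardYoungTableau μ} {hT : IsStdYT n T}
    {hdes : sytDes n T ⊆ Dset l n} (j : ℕ) :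
    ssytWeight (unstd l hs hlen hμ T hT hdes) j
      = ((Finset.range n).filter fun k => l.getD k 0 = j).card := by
  rw [ssytWeight]
  apply Finset.card_nbij (fun c => T c.1 c.2 - 1)
  · intro c hc
    rw [Finset.mem_coe, Finset.mem_filter] at hc
    have ha : 1 ≤ T c.1 c.2 ∧ T c.1 c.2 ≤ n := Finset.mem_Icc.1 (std_mem_Icc hμ hT c hc.1)
    have he := unstd_entry (hs := hs) (hlen := hlen) (hμ := hμ) (hT := hT) (hdes := hdes) hc.1
    rw [Finset.mem_coe, Finset.mem_filter, Finset.mem_range]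
    beta_reduce
    refine ⟨by omega, ?_⟩
    rw [← hc.2, he]
  · intro a ha b hb hab
    simp only [Finset.coe_filter, Set.mem_setOf_eq] at ha hb
    have ha' : 1 ≤ T a.1 a.2 ∧ T a.1 a.2 ≤ n := Finset.mem_Icc.1 (std_mem_Icc hμ hT a ha.1)
    have hb' : 1 ≤ T b.1 b.2 ∧ T b.1 b.2 ≤ n := Finset.mem_Icc.1 (std_mem_Icc hμ hT b hb.1)
    dsimp only at hab
    exact std_injOn hμ hT a ha.1 b hb.1 (by omega)
  · intro k hk
    simp only [Finset.coe_filter, Set.mem_setOf_eq, Finset.mem_range] at hk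
    obtain ⟨c, hc, hTc⟩ := std_exists_cell hT
      (Finset.mem_Icc.2 ⟨by omega, by omega⟩ : k + 1 ∈ Finset.Icc 1 n)
    refine ⟨c, ?_, by dsimp only; omega⟩
    simp only [Finset.coe_filter, Set.mem_setOf_eq]
    refine ⟨hc, ?_⟩
    rw [unstd_entry (hs := hs) (hlen := hlen) (hμ := hμ) (hT := hT) (hdes := hdes) hc, hTc]
    simpa using hk.2

end Unstd

section Main

variable {μ : YoungDiagram} {n : ℕ} {l : List ℕ}

lemma count_lt_transfer (hμ : μ.cells.card = n) {P : SemistandardYoungTableau μ}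
    (hP : ∀ j, ssytWeight P j = ((Finset.range n).filter fun k => l.getD k 0 = j).card)
    (v : ℕ) :
    (μ.cells.filter fun c => P c.1 c.2 < v).card
      = ((Finset.range n).filter fun k => l.getD k 0 < v).card := by
  exact (card_filter_lt_sum μ.cells (fun c => P c.1 c.2) v).trans
    ((Finset.sum_congr rfl fun j _ => hP j).trans
      (card_filter_lt_sum (Finset.range n) (fun k => l.getD k 0) v).symm)

lemma count_le_transfer (hμ : μ.cells.card = n) {P : SemistandardYoungTableau μ}
    (hP : ∀ j, ssytWeight P j = ((Finset.range n).filter fun k => l.getD k 0 = j).card)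
    (v : ℕ) :
    (μ.cells.filter fun c => P c.1 c.2 ≤ v).card
      = ((Finset.range n).filter fun k => l.getD k 0 ≤ v).card := by
  exact (card_filter_le_sum μ.cells (fun c => P c.1 c.2) v).trans
    ((Finset.sum_congr rfl fun j _ => hP j).trans
      (card_filter_le_sum (Finset.range n) (fun k => l.getD k 0) v).symm)

lemma stdize_val (hμ : μ.cells.card = n) (hs : l.Pairwise (· ≤ ·)) (hlen : l.length = n)
    {P : SemistandardYoungTableau μ}
    (hP : ∀ j, ssytWeight P j = ((Finset.range n).filter fun k => l.getD k 0 = j).card)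
    {c : ℕ × ℕ} (hc : c ∈ μ.cells) :
    l.getD (rnk P c - 1) 0 = P c.1 c.2 := by
  have hrk : rnk P c ∈ Finset.Icc 1 n := rnk_mem_Icc hμ hc
  rw [Finset.mem_Icc] at hrk
  have hn : 1 ≤ n := by omega
  apply sorted_getD_eq hs (by omega : rnk P c - 1 < l.length)
  · rw [hlen, ← count_lt_transfer hμ hP]
    have hsub : (μ.cells.filter fun c' => P c'.1 c'.2 < P c.1 c.2)
        ⊆ μ.cells.filter fun c' => keyLt P c' c := by
      intro x hx
      rw [Finset.mem_filter] at hx ⊢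
      exact ⟨hx.1, Or.inl hx.2⟩
    have := Finset.card_le_card hsub
    unfold rnk at hrk ⊢
    omega
  · rw [hlen, ← count_le_transfer hμ hP]
    have hsub : insert c (μ.cells.filter fun c' => keyLt P c' c)
        ⊆ μ.cells.filter fun c' => P c'.1 c'.2 ≤ P c.1 c.2 := by
      intro x hx
      rcases Finset.mem_insert.1 hx with rfl | hx
      · exact Finset.mem_filter.2 ⟨hc, le_refl _⟩
      · rw [Finset.mem_filter] at hx ⊢
        rcases hx.2 with h | ⟨h, _⟩
        · exact ⟨hx.1, le_of_lt h⟩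
        · exact ⟨hx.1, le_of_eq h⟩
    have hni : c ∉ μ.cells.filter fun c' => keyLt P c' c := by
      intro hx
      exact keyLt_asymm (Finset.mem_filter.1 hx).2 (Finset.mem_filter.1 hx).2
    have h1 := Finset.card_le_card hsub
    rw [Finset.card_insert_of_notMem hni] at h1
    unfold rnk at hrk ⊢
    omega

lemma stdize_des (hμ : μ.cells.card = n) (hs : l.Pairwise (· ≤ ·)) (hlen : l.length = n)
    {P : SemistandardYoungTableau μ}
    (hP : ∀ j, ssytWeight P j = ((Finset.range n).filter fun k => l.getD k 0 = j).card) :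
    sytDes n (stdize P) ⊆ Dset l n := by
  intro k hk
  rw [sytDes, Finset.mem_filter, Finset.mem_Icc] at hk
  obtain ⟨⟨hk1, hk2⟩, c1, hc1, c2, hc2, hT1, hT2, hrow⟩ := hk
  have hn : 1 ≤ n := by
    have := Finset.card_pos.2 ⟨c1, hc1⟩
    omega
  rw [stdize_entry hc1] at hT1
  rw [stdize_entry hc2] at hT2
  -- P c1 < P c2
  have hPlt : P c1.1 c1.2 < P c2.1 c2.2 := by
    have hkey : keyLt P c1 c2 := by
      rcases keyLt_trichotomy P hc1 hc2 with h | h | h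
      · exact h
      · exfalso; rw [h, hT2] at hT1; omega
      · exfalso
        have := rnk_lt_rnk hc2 h
        omega
    rcases hkey with h | ⟨heq, hcol⟩
    · exact h
    · exfalso
      have hm : (c2.1, c1.2) ∈ μ := μ.up_left_mem (le_refl _) (le_of_lt hcol)
        ((YoungDiagram.mem_cells c2).1 hc2)
      have ha := P.col_strict hrow hm
      have hb := P.row_weak hcol ((YoungDiagram.mem_cells c2).1 hc2)
      omega
  rw [Dset, Finset.mem_filter, Finset.mem_Ico]
  refine ⟨⟨by omega, by omega⟩, ?_⟩
  have e1 : l.getD (k - 1) 0 = P c1.1 c1.2 := by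
    have := stdize_val hμ hs hlen hP hc1
    rw [hT1] at this
    exact this
  have e2 : l.getD k 0 = P c2.1 c2.2 := by
    have := stdize_val hμ hs hlen hP hc2
    rw [hT2] at this
    simpa using this
  omega

lemma noDesc_of_getD_eq (hs : l.Pairwise (· ≤ ·)) (hlen : l.length = n)
    {T : SemistandardYoungTableau μ} (hdes : sytDes n T ⊆ Dset l n)
    {a b : ℕ} (ha : 1 ≤ a) (hab : a ≤ b) (hb : b ≤ n)
    (heq : l.getD (a-1) 0 = l.getD (b-1) 0) :
    ∀ k, a ≤ k → k < b → k ∉ sytDes n T := by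
  intro k h1 h2 hk
  have hD := hdes hk
  rw [Dset, Finset.mem_filter, Finset.mem_Ico] at hD
  have m1 : l.getD (a-1) 0 ≤ l.getD (k-1) 0 := sorted_getD_mono hs (by omega) (by omega)
  have m2 : l.getD k 0 ≤ l.getD (b-1) 0 := sorted_getD_mono hs (by omega) (by omega)
  omega

lemma unstd_keyLt_iff (hμ : μ.cells.card = n) (hs : l.Pairwise (· ≤ ·)) (hlen : l.length = n)
    {T : SemistandardYoungTableau μ} (hT : IsStdYT n T) (hdes : sytDes n T ⊆ Dset l n)
    {c c' : ℕ × ℕ} (hc : c ∈ μ.cells) (hc' : c' ∈ μ.cells) :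
    keyLt (unstd l hs hlen hμ T hT hdes) c' c ↔ T c'.1 c'.2 < T c.1 c.2 := by
  have ha : 1 ≤ T c'.1 c'.2 ∧ T c'.1 c'.2 ≤ n := Finset.mem_Icc.1 (std_mem_Icc hμ hT c' hc')
  have hb : 1 ≤ T c.1 c.2 ∧ T c.1 c.2 ≤ n := Finset.mem_Icc.1 (std_mem_Icc hμ hT c hc)
  have e' : unstd l hs hlen hμ T hT hdes c'.1 c'.2 = l.getD (T c'.1 c'.2 - 1) 0 :=
    unstd_entry hc'
  have e : unstd l hs hlen hμ T hT hdes c.1 c.2 = l.getD (T c.1 c.2 - 1) 0 :=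
    unstd_entry hc
  constructor
  · intro hkey
    rcases hkey with h | ⟨heq, hcol⟩
    · rw [e, e'] at h
      by_contra hcon
      push_neg at hcon
      exact absurd (sorted_getD_mono hs (by omega) (by omega)) (not_le.2 h)
    · rw [e, e'] at heq
      by_contra hcon
      push_neg at hcon
      rcases lt_or_eq_of_le hcon with hlt | heq2
      · have hnd := noDesc_of_getD_eq hs hlen hdes hb.1 (le_of_lt hlt) ha.2 heq.symm
        have := (noDescRun hμ hT _ hb.1 _ (le_of_lt hlt) ha.2 hnd c hc c' hc' rfl rfl).2 hlt
        omega
      · have : c = c' := std_injOn hμ hT c hc c' hc' heq2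
        rw [this] at hcol
        omega
  · intro hlt
    rcases lt_or_eq_of_le (sorted_getD_mono hs (show T c'.1 c'.2 - 1 ≤ T c.1 c.2 - 1 by omega)
        (by omega : T c.1 c.2 - 1 < l.length)) with h | h
    · left
      rw [e, e']
      exact h
    · right
      rw [e, e']
      refine ⟨h, ?_⟩
      have hnd := noDesc_of_getD_eq hs hlen hdes ha.1 (le_of_lt hlt) hb.2 h
      exact (noDescRun hμ hT _ ha.1 _ (le_of_lt hlt) hb.2 hnd c' hc' c hc rfl rfl).2 hlt

lemma std_card_lt (hμ : μ.cells.card = n) {T : SemistandardYoungTableau μ}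
    (hT : IsStdYT n T) {c : ℕ × ℕ} (hc : c ∈ μ.cells) :
    (μ.cells.filter fun c' => T c'.1 c'.2 < T c.1 c.2).card = T c.1 c.2 - 1 := by
  have hb : 1 ≤ T c.1 c.2 ∧ T c.1 c.2 ≤ n := Finset.mem_Icc.1 (std_mem_Icc hμ hT c hc)
  have : (μ.cells.filter fun c' => T c'.1 c'.2 < T c.1 c.2).card
      = (Finset.Icc 1 (T c.1 c.2 - 1)).card := by
    apply Finset.card_nbij (fun c' => T c'.1 c'.2)
    · intro x hx
      rw [Finset.mem_coe, Finset.mem_filter] at hx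
      have := Finset.mem_Icc.1 (std_mem_Icc hμ hT x hx.1)
      rw [Finset.mem_coe, Finset.mem_Icc]
      beta_reduce
      omega
    · intro x hx y hy hxy
      simp only [Finset.coe_filter, Set.mem_setOf_eq] at hx hy
      exact std_injOn hμ hT x hx.1 y hy.1 hxy
    · intro k hk
      simp only [Finset.coe_Icc, Set.mem_Icc] at hk
      obtain ⟨x, hx, hTx⟩ := std_exists_cell hT
        (Finset.mem_Icc.2 ⟨by omega, by omega⟩ : k ∈ Finset.Icc 1 n)
      refine ⟨x, ?_, hTx⟩
      simp only [Finset.coe_filter, Set.mem_setOf_eq]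
      exact ⟨hx, by omega⟩
  rw [this, Nat.card_Icc]
  omega

lemma stdize_unstd (hμ : μ.cells.card = n) (hs : l.Pairwise (· ≤ ·)) (hlen : l.length = n)
    {T : SemistandardYoungTableau μ} (hT : IsStdYT n T) (hdes : sytDes n T ⊆ Dset l n) :
    stdize (unstd l hs hlen hμ T hT hdes) = T := by
  ext i j
  by_cases hm : (i, j) ∈ μ
  · have hcell : (i, j) ∈ μ.cells := (YoungDiagram.mem_cells _).2 hm
    have h1 : stdize (unstd l hs hlen hμ T hT hdes) i j
        = rnk (unstd l hs hlen hμ T hT hdes) (i, j) := stdize_entry hcell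
    rw [h1, rnk]
    have hfe : (μ.cells.filter fun c' => keyLt (unstd l hs hlen hμ T hT hdes) c' (i, j))
        = μ.cells.filter fun c' => T c'.1 c'.2 < T i j := by
      apply Finset.filter_congr
      intro x hx
      exact unstd_keyLt_iff hμ hs hlen hT hdes hcell hx
    rw [hfe, std_card_lt hμ hT hcell]
    have hb : 1 ≤ T i j ∧ T i j ≤ n :=
      Finset.mem_Icc.1 (std_mem_Icc hμ hT (i, j) hcell)
    show T i j - 1 + 1 = T i j
    omega
  · rw [T.zeros hm]
    exact (stdize (unstd l hs hlen hμ T hT hdes)).zeros hm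

lemma unstd_stdize (hμ : μ.cells.card = n) (hs : l.Pairwise (· ≤ ·)) (hlen : l.length = n)
    {P : SemistandardYoungTableau μ}
    (hP : ∀ j, ssytWeight P j = ((Finset.range n).filter fun k => l.getD k 0 = j).card)
    (hT : IsStdYT n (stdize P)) (hdes : sytDes n (stdize P) ⊆ Dset l n) :
    unstd l hs hlen hμ (stdize P) hT hdes = P := by
  ext i j
  by_cases hm : (i, j) ∈ μ
  · have hcell : (i, j) ∈ μ.cells := (YoungDiagram.mem_cells _).2 hm
    have h1 : unstd l hs hlen hμ (stdize P) hT hdes i j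
        = l.getD (stdize P i j - 1) 0 := unstd_entry hcell
    rw [h1, stdize_entry hcell]
    exact stdize_val hμ hs hlen hP hcell
  · rw [P.zeros hm]
    exact (unstd l hs hlen hμ (stdize P) hT hdes).zeros hm

lemma main_card_eq (hμ : μ.cells.card = n) (hs : l.Pairwise (· ≤ ·)) (hlen : l.length = n) :
    Nat.card {P : SemistandardYoungTableau μ //
        ∀ j, ssytWeight P j = ((Finset.range n).filter fun k => l.getD k 0 = j).card}
      = Nat.card {T : SemistandardYoungTableau μ //
        IsStdYT n T ∧ sytDes n T ⊆ Dset l n} := by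
  refine Nat.card_congr ⟨fun P => ⟨stdize P.1, stdize_isStd hμ P.1, stdize_des hμ hs hlen P.2⟩,
    fun T => ⟨unstd l hs hlen hμ T.1 T.2.1 T.2.2, fun j => unstd_weight j⟩, ?_, ?_⟩
  · intro P
    exact Subtype.ext (unstd_stdize hμ hs hlen P.2 (stdize_isStd hμ P.1) (stdize_des hμ hs hlen P.2))
  · intro T
    exact Subtype.ext (stdize_unstd hμ hs hlen T.2.1 T.2.2)

end Main

section Final

variable {μ : YoungDiagram} {n : ℕ}

lemma getD_fiber_card {l : List ℕ} (hlen : l.length = n) (j : ℕ) :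
    (Finset.univ.filter fun t : Fin n => l.getD t.val 0 = j).card = l.count j := by
  calc (Finset.univ.filter fun t : Fin n => l.getD t.val 0 = j).card
      = ((Finset.range n).filter fun k => l.getD k 0 = j).card :=
        card_filter_fin n (fun k => l.getD k 0 = j)
    _ = l.count j := by rw [← hlen]; exact getD_count j l

lemma sort_count (d : ℕ →₀ ℕ) (j : ℕ) :
    (Multiset.sort d.toMultiset (· ≤ ·)).count j = d j := by
  have h1 : (↑(Multiset.sort d.toMultiset (· ≤ ·)) : Multiset ℕ) = d.toMultiset :=
    Multiset.sort_eq _ _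
  calc (Multiset.sort d.toMultiset (· ≤ ·)).count j
      = Multiset.count j ↑(Multiset.sort d.toMultiset (· ≤ ·)) :=
        (Multiset.coe_count j _).symm
    _ = d j := by rw [h1, Finsupp.count_toMultiset]

lemma sort_length (d : ℕ →₀ ℕ) :
    (Multiset.sort d.toMultiset (· ≤ ·)).length = d.sum fun _ k => k := by
  rw [Multiset.length_sort, Finsupp.card_toMultiset]
  rfl

lemma fqsym_eval (n : ℕ) (c : Composition n) (d : ℕ →₀ ℕ) :
    Fqsym n c d = if d.sum (fun _ k => k) = n ∧
        c.descSet ⊆ Dset (Multiset.sort d.toMultiset (· ≤ ·)) n then 1 else 0 := by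
  set l := Multiset.sort d.toMultiset (· ≤ ·) with hl
  have hs : l.Pairwise (· ≤ ·) := Multiset.pairwise_sort _ _
  have hcount : ∀ j, l.count j = d j := sort_count d
  have hlensum : l.length = d.sum fun _ k => k := sort_length d
  show (if _ then (1 : ℂ) else 0) = _
  apply if_congr _ rfl rfl
  constructor
  · rintro ⟨e, hmono, hdese, hfib⟩
    have hmem : ∀ t : Fin n, e t ∈ d.support := by
      intro t
      rw [Finsupp.mem_support_iff]
      have h1 := hfib (e t)
      have h2 : t ∈ Finset.univ.filter fun t' => e t' = e t := by simp
      have h3 := Finset.card_pos.2 ⟨t, h2⟩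
      omega
    have hcardeq : (Finset.univ : Finset (Fin n)).card
        = ∑ j ∈ d.support, (Finset.univ.filter fun t => e t = j).card :=
      Finset.card_eq_sum_card_fiberwise (fun t _ => hmem t)
    rw [Finset.card_univ, Fintype.card_fin] at hcardeq
    have hsum : d.sum (fun _ k => k) = n := by
      rw [Finsupp.sum, hcardeq]
      exact Finset.sum_congr rfl fun j _ => hfib j
    have hlen : l.length = n := hlensum.trans hsum
    refine ⟨hsum, ?_⟩
    have hee' : e = fun t : Fin n => l.getD t.val 0 := by
      apply monotone_eq_of_fibers _ _ hmono
      · intro a b hab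
        exact sorted_getD_mono hs hab (by rw [hlen]; exact b.isLt)
      · intro j
        rw [← hfib j, getD_fiber_card hlen j, hcount j]
    intro k hk
    have hIcc := Finset.mem_Icc.1 (c.descSet_subset hk)
    have hklt : k < n := by omega
    have hlt := hdese k hklt hk
    rw [hee'] at hlt
    rw [Dset, Finset.mem_filter, Finset.mem_Ico]
    exact ⟨⟨hIcc.1, hklt⟩, hlt⟩
  · rintro ⟨hsum, hsub⟩
    have hlen : l.length = n := hlensum.trans hsum
    refine ⟨fun t => l.getD t.val 0, ?_, ?_, ?_⟩
    · intro a b hab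
      exact sorted_getD_mono hs hab (by rw [hlen]; exact b.isLt)
    · intro k hklt hk
      have hD := hsub hk
      rw [Dset, Finset.mem_filter, Finset.mem_Ico] at hD
      exact hD.2
    · intro j
      rw [getD_fiber_card hlen j, hcount j]

lemma schur_coeff_empty (hμ : μ.cells.card = n) {d : ℕ →₀ ℕ}
    (hd : d.sum (fun _ k => k) ≠ n) :
    IsEmpty {P : SemistandardYoungTableau μ // ∀ j, ssytWeight P j = d j} := by
  constructor
  rintro ⟨P, hP⟩
  apply hd
  have hmem : ∀ c ∈ μ.cells, P c.1 c.2 ∈ d.support := by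
    intro c hc
    rw [Finsupp.mem_support_iff]
    have h1 := hP (P c.1 c.2)
    have h2 : c ∈ μ.cells.filter fun c' => P c'.1 c'.2 = P c.1 c.2 :=
      Finset.mem_filter.2 ⟨hc, rfl⟩
    have h3 := Finset.card_pos.2 ⟨c, h2⟩
    rw [ssytWeight] at h1
    omega
  have hcardeq := Finset.card_eq_sum_card_fiberwise hmem
  rw [hμ] at hcardeq
  rw [Finsupp.sum, hcardeq]
  exact Finset.sum_congr rfl fun j _ => by rw [← hP j, ssytWeight]

lemma finite_std (hμ : μ.cells.card = n) :
    Finite {T : SemistandardYoungTableau μ // IsStdYT n T} := by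
  apply Finite.of_injective (fun T (c : μ.cells) =>
    (⟨T.1 c.1.1 c.1.2, by
      have := Finset.mem_Icc.1 (std_mem_Icc hμ T.2 c.1 c.2)
      omega⟩ : Fin (n+1)))
  intro T1 T2 h
  apply Subtype.ext
  ext i j
  by_cases hm : (i, j) ∈ μ
  · have := congrFun h ⟨(i, j), (YoungDiagram.mem_cells _).2 hm⟩
    exact congrArg Fin.val this
  · rw [T1.1.zeros hm, T2.1.zeros hm]

lemma card_partition (hμ : μ.cells.card = n) (D : Finset ℕ) :
    Nat.card {T : SemistandardYoungTableau μ // IsStdYT n T ∧ sytDes n T ⊆ D}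
      = ∑ I ∈ D.powerset, dCoef μ n I := by
  haveI : Finite {T : SemistandardYoungTableau μ // IsStdYT n T} := finite_std hμ
  haveI : Fintype {T : SemistandardYoungTableau μ // IsStdYT n T} := Fintype.ofFinite _
  have h1 : Nat.card {T : SemistandardYoungTableau μ // IsStdYT n T ∧ sytDes n T ⊆ D}
      = (Finset.univ.filter fun x : {T : SemistandardYoungTableau μ // IsStdYT n T} =>
          sytDes n x.1 ⊆ D).card := by
    rw [Nat.card_congr (Equiv.subtypeSubtypeEquivSubtypeInter (IsStdYT n)
      (fun T => sytDes n T ⊆ D)).symm]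
    rw [Nat.card_eq_fintype_card, Fintype.card_subtype]
  have h2 : ∀ I, dCoef μ n I
      = (Finset.univ.filter fun x : {T : SemistandardYoungTableau μ // IsStdYT n T} =>
          sytDes n x.1 = I).card := by
    intro I
    rw [dCoef, Nat.card_congr (Equiv.subtypeSubtypeEquivSubtypeInter (IsStdYT n)
      (fun T => sytDes n T = I)).symm]
    rw [Nat.card_eq_fintype_card, Fintype.card_subtype]
  rw [h1, Finset.sum_congr rfl fun I _ => h2 I]
  rw [Finset.card_eq_sum_card_fiberwise
    (f := fun x : {T : SemistandardYoungTableau μ // IsStdYT n T} => sytDes n x.1)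
    (t := D.powerset) (fun x hx => Finset.mem_powerset.2 (Finset.mem_filter.1 hx).2)]
  apply Finset.sum_congr rfl
  intro I hI
  rw [Finset.filter_filter]
  congr 1
  apply Finset.filter_congr
  intro x _
  constructor
  · rintro ⟨_, h⟩; exact h
  · intro h
    refine ⟨?_, h⟩
    show sytDes n x.1 ⊆ D
    rw [h]
    exact Finset.mem_powerset.1 hI


/-- `s_λ = Σ_{α ⊨ n} d_{λ, set(α)} F_α`. -/
theorem stmt5 (n : ℕ) (μ : YoungDiagram) (hμ : μ.cells.card = n) :
    schur μ = ∑ α : Composition n, (dCoef μ n α.descSet : ℂ) • Fqsym n α := by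
  funext d
  have happ : (∑ α : Composition n, (dCoef μ n α.descSet : ℂ) • Fqsym n α) d
      = ∑ α : Composition n, (dCoef μ n α.descSet : ℂ) * Fqsym n α d := by
    exact (Finset.sum_apply d Finset.univ _).trans (Finset.sum_congr rfl fun α _ => rfl)
  rw [happ]
  set l := Multiset.sort d.toMultiset (· ≤ ·) with hl
  have hfq : ∀ α : Composition n, Fqsym n α d
      = if d.sum (fun _ k => k) = n ∧ α.descSet ⊆ Dset l n then 1 else 0 :=
    fun α => fqsym_eval n α d
  by_cases hsum : d.sum (fun _ k => k) = n
  · have hs : l.Pairwise (· ≤ ·) := Multiset.pairwise_sort _ _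
    have hlen : l.length = n := (sort_length d).trans hsum
    have hdj : ∀ j, (d j : ℕ) = ((Finset.range n).filter fun k => l.getD k 0 = j).card := by
      intro j
      rw [← sort_count d j, ← hl, ← getD_count j l, hlen]
    have hL : schur μ d = (Nat.card {T : SemistandardYoungTableau μ //
        IsStdYT n T ∧ sytDes n T ⊆ Dset l n} : ℂ) := by
      show ((Nat.card {P : SemistandardYoungTableau μ // ∀ j, ssytWeight P j = d j} : ℕ) : ℂ) = _
      congr 1
      rw [← main_card_eq hμ hs hlen]
      apply Nat.card_congr
      apply Equiv.subtypeEquivRight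
      intro P
      constructor
      · intro h j; rw [h j, hdj j]
      · intro h j; rw [h j, ← hdj j]
    rw [hL]
    have hD : Dset l n ⊆ Finset.Icc 1 (n-1) := by
      intro k hk
      rw [Dset, Finset.mem_filter, Finset.mem_Ico] at hk
      rw [Finset.mem_Icc]
      omega
    have hR : ∑ α : Composition n, (dCoef μ n α.descSet : ℂ) * Fqsym n α d
        = ∑ I ∈ (Dset l n).powerset, (dCoef μ n I : ℂ) := by
      have step1 : ∀ α : Composition n, (dCoef μ n α.descSet : ℂ) * Fqsym n α d
          = if α.descSet ⊆ Dset l n then (dCoef μ n α.descSet : ℂ) else 0 := by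
        intro α
        rw [hfq α]
        by_cases hc : α.descSet ⊆ Dset l n
        · rw [if_pos ⟨hsum, hc⟩, if_pos hc, mul_one]
        · rw [if_neg (fun hh => hc hh.2), if_neg hc, mul_zero]
      rw [Finset.sum_congr rfl fun α _ => step1 α]
      rw [Composition.sum_descSet (fun I => if I ⊆ Dset l n then (dCoef μ n I : ℂ) else 0)]
      rw [← Finset.sum_subset (Finset.powerset_mono.2 hD)]
      · apply Finset.sum_congr rfl
        intro I hI
        rw [if_pos (Finset.mem_powerset.1 hI)]
      · intro I _ hI2
        rw [if_neg (fun hc => hI2 (Finset.mem_powerset.2 hc))]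
    rw [hR, card_partition hμ (Dset l n)]
    push_cast
    rfl
  · have hz : ∀ α : Composition n, Fqsym n α d = 0 := by
      intro α
      rw [hfq α, if_neg (fun hc => hsum hc.1)]
    rw [Finset.sum_congr rfl fun α _ => by rw [hz α, mul_zero]]
    rw [Finset.sum_const_zero]
    show ((Nat.card {P : SemistandardYoungTableau μ // ∀ j, ssytWeight P j = d j} : ℕ) : ℂ) = 0
    haveI := schur_coeff_empty hμ hsum
    rw [Nat.card_of_isEmpty, Nat.cast_zero]

end Final
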